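/- Suppose in addition that G is irreducible, in the sense that G is not the zero matrix and there is no partition of S into two nonempty disjoint sets J and J' with G_{s s'} = 0 for all s ∈ J and s' ∈ J'. Then M̄_ss > 0 for all s ∈ S, and the symmetric matrix G is positive definite (xᵀGx > 0 for all nonzero x ∈ ℝ^S). -/
import Mathlib


open Matrix

noncomputable section

/-- The diagonal of `M̄`: `dᵀ(I−Q)⁻¹`. -/
def MdiagSub {S : Type*} [Fintype S] [DecidableEq S]
    (Q : Matrix S S ℝ) (d : S → ℝ) : S → ℝ :=
  Matrix.vecMul d (1 - Q)⁻¹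

/-- `G = M̄(I−Q) + (M̄(I−Q))ᵀ`. -/
def Gmat {S : Type*} [Fintype S] [DecidableEq S]
    (Q : Matrix S S ℝ) (d : S → ℝ) : Matrix S S ℝ :=
  Matrix.diagonal (MdiagSub Q d) * (1 - Q) +
    (Matrix.diagonal (MdiagSub Q d) * (1 - Q)).transpose

end

/-- If a nonempty set of rows `J` of `A` is supported on columns in `J` and each such
row sums to zero over `J`, then `A` is not invertible. -/
lemma aux_not_isUnit {S : Type} [Fintype S] [DecidableEq S]
    (A : Matrix S S ℝ) (J : Finset S) (hJ : J.Nonempty)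
    (h0 : ∀ t ∈ J, ∀ s' ∉ J, A t s' = 0)
    (h1 : ∀ t ∈ J, ∑ s' ∈ J, A t s' = 0) :
    ¬ IsUnit A := by
  intro hu
  haveI : Nonempty J := hJ.to_subtype
  set B : Matrix J J ℝ := fun t s' => A t s' with hB
  have hB1 : B *ᵥ (fun _ => 1) = 0 := by
    funext t
    simp only [Matrix.mulVec, dotProduct, mul_one, Pi.zero_apply, hB]
    rw [Finset.sum_coe_sort J (fun s' => A t s')]
    exact h1 t t.2
  have hdet : B.det = 0 := by
    rw [← Matrix.exists_mulVec_eq_zero_iff]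
    exact ⟨fun _ => 1, by simp [funext_iff], hB1⟩
  obtain ⟨w, hw, hwB⟩ := Matrix.exists_vecMul_eq_zero_iff.mpr hdet
  set w' : S → ℝ := fun s => if h : s ∈ J then w ⟨s, h⟩ else 0 with hw'
  have hw'A : w' ᵥ* A = 0 := by
    funext s'
    have hsum : (w' ᵥ* A) s' = ∑ t : J, w t * A t s' := by
      simp only [Matrix.vecMul, dotProduct]
      rw [show (∑ t : S, w' t * A t s') = ∑ t ∈ J, w' t * A t s' from
        (Finset.sum_subset (Finset.subset_univ J) (fun t _ ht => by simp [hw', ht])).symm,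
        ← Finset.sum_coe_sort J (fun t => w' t * A t s')]
      exact Finset.sum_congr rfl fun t _ => by simp [hw', t.2]
    rw [hsum]
    by_cases hs' : s' ∈ J
    · have := congrFun hwB ⟨s', hs'⟩
      simpa [Matrix.vecMul, dotProduct, hB] using this
    · simp only [Pi.zero_apply]
      apply Finset.sum_eq_zero
      intro t _
      rw [h0 t t.2 s' hs', mul_zero]
  have hw'0 : w' ≠ 0 := by
    obtain ⟨t, ht⟩ := Function.ne_iff.mp hw
    intro h
    apply ht
    have := congrFun h t.1
    simpa [hw', t.2] using this
  apply hw'0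
  have hdet' : IsUnit A.det := (Matrix.isUnit_iff_isUnit_det A).mp hu
  calc w' = w' ᵥ* 1 := by simp
    _ = w' ᵥ* (A * A⁻¹) := by rw [Matrix.mul_nonsing_inv A hdet']
    _ = (w' ᵥ* A) ᵥ* A⁻¹ := (Matrix.vecMul_vecMul _ _ _).symm
    _ = 0 := by rw [hw'A]; simp

lemma aux_hm {S : Type} [Fintype S] [DecidableEq S]
    (Q : Matrix S S ℝ) (hinv : IsUnit (1 - Q)) (d : S → ℝ) (s : S) :
    ∑ t, MdiagSub Q d t * Q t s = MdiagSub Q d s - d s := by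
  have hdet : IsUnit (1 - Q).det := (Matrix.isUnit_iff_isUnit_det _).mp hinv
  have h : MdiagSub Q d ᵥ* (1 - Q) = d := by
    rw [MdiagSub, Matrix.vecMul_vecMul, Matrix.nonsing_inv_mul _ hdet, Matrix.vecMul_one]
  have h2 := congrFun h s
  simp only [Matrix.vecMul, dotProduct, Matrix.sub_apply, Matrix.one_apply,
    mul_sub] at h2
  rw [Finset.sum_sub_distrib] at h2
  have h1 : ∑ t, MdiagSub Q d t * (if t = s then (1:ℝ) else 0) = MdiagSub Q d s := by
    simp [Finset.sum_ite_eq']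
  rw [h1] at h2
  linarith

lemma aux_nonneg {S : Type} [Fintype S] [DecidableEq S]
    (Q : Matrix S S ℝ) (hQ0 : ∀ s s', 0 ≤ Q s s') (hQ1 : ∀ s, ∑ s', Q s s' ≤ 1)
    (hinv : IsUnit (1 - Q)) (d : S → ℝ) (hd : ∀ s, 0 ≤ d s) (s : S) :
    0 ≤ MdiagSub Q d s := by
  set m := MdiagSub Q d with hmdef
  by_contra hneg
  push_neg at hneg
  set J : Finset S := Finset.univ.filter (fun s => m s < 0) with hJdef
  set Jc : Finset S := Finset.univ.filter (fun s => ¬ m s < 0) with hJcdef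
  have hmemJ : ∀ t, t ∈ J ↔ m t < 0 := fun t => by simp [hJdef]
  have hsJ : s ∈ J := (hmemJ s).mpr hneg
  have hJne : J.Nonempty := ⟨s, hsJ⟩
  set c : S → ℝ := fun t => ∑ s' ∈ J, Q t s' with hcdef
  have hc0 : ∀ t, 0 ≤ c t := fun t => Finset.sum_nonneg fun s' _ => hQ0 t s'
  have hcsplit : ∀ t, c t + ∑ s' ∈ Jc, Q t s' = ∑ s', Q t s' :=
    fun t => Finset.sum_filter_add_sum_filter_not Finset.univ (fun s => m s < 0) (Q t)
  have hc1 : ∀ t, c t ≤ 1 := fun t => by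
    have := hcsplit t
    have h2 : 0 ≤ ∑ s' ∈ Jc, Q t s' := Finset.sum_nonneg fun s' _ => hQ0 t s'
    have := hQ1 t
    linarith
  have hd' : ∀ t, d t = m t - ∑ u, m u * Q u t := fun t => by
    have := aux_hm Q hinv d t; rw [← hmdef] at this; linarith
  have hswap : ∑ t ∈ J, ∑ u, m u * Q u t = ∑ u, m u * c u := by
    rw [Finset.sum_comm]
    exact Finset.sum_congr rfl fun u _ => (Finset.mul_sum _ _ _).symm
  have hmcsplit : ∑ u, m u * c u = ∑ u ∈ J, m u * c u + ∑ u ∈ Jc, m u * c u :=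
    (Finset.sum_filter_add_sum_filter_not Finset.univ (fun s => m s < 0) _).symm
  have hkey : ∑ t ∈ J, d t = ∑ t ∈ J, m t * (1 - c t) - ∑ u ∈ Jc, m u * c u := by
    have e1 : ∑ t ∈ J, d t = ∑ t ∈ J, m t - ∑ u, m u * c u := by
      rw [← hswap, ← Finset.sum_sub_distrib]
      exact Finset.sum_congr rfl fun t _ => hd' t
    have e2 : ∑ t ∈ J, m t - ∑ u ∈ J, m u * c u = ∑ t ∈ J, m t * (1 - c t) := by
      rw [← Finset.sum_sub_distrib]
      exact Finset.sum_congr rfl fun t _ => by ring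
    rw [e1, hmcsplit]
    linarith
  have hA : ∑ t ∈ J, m t * (1 - c t) ≤ 0 :=
    Finset.sum_nonpos fun t ht => mul_nonpos_of_nonpos_of_nonneg
      (le_of_lt ((hmemJ t).mp ht)) (by have := hc1 t; linarith)
  have hB : 0 ≤ ∑ u ∈ Jc, m u * c u :=
    Finset.sum_nonneg fun u hu => mul_nonneg
      (by simp [hJcdef] at hu; linarith) (hc0 u)
  have hD : 0 ≤ ∑ t ∈ J, d t := Finset.sum_nonneg fun t _ => hd t
  have hA0 : ∑ t ∈ J, m t * (1 - c t) = 0 := le_antisymm hA (by linarith)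
  have hc1' : ∀ t ∈ J, c t = 1 := by
    intro t ht
    have := (Finset.sum_eq_zero_iff_of_nonpos (fun u hu =>
      mul_nonpos_of_nonpos_of_nonneg (le_of_lt ((hmemJ u).mp hu))
        (by have := hc1 u; linarith))).mp hA0 t ht
    have hmt := (hmemJ t).mp ht
    rcases mul_eq_zero.mp this with h | h
    · linarith
    · linarith
  -- now contradiction with invertibility
  apply aux_not_isUnit (1 - Q) J hJne ?_ ?_ hinv
  · intro t ht s' hs'
    have hts' : t ≠ s' := fun h => hs' (h ▸ ht)
    have hzero : ∑ u ∈ Jc, Q t u = 0 := by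
      have h1 := hcsplit t
      have h2 := hQ1 t
      have h3 := hc1' t ht
      have h4 : 0 ≤ ∑ u ∈ Jc, Q t u := Finset.sum_nonneg fun u _ => hQ0 t u
      linarith
    have hQts' : Q t s' = 0 := by
      have := (Finset.sum_eq_zero_iff_of_nonneg (fun u _ => hQ0 t u)).mp hzero s'
        (by simp only [hJcdef, Finset.mem_filter, Finset.mem_univ, true_and]
            exact fun h => hs' ((hmemJ s').mpr h))
      exact this
    simp [Matrix.sub_apply, Matrix.one_apply, hts', hQts']
  · intro t ht
    have : ∑ s' ∈ J, ((1 : Matrix S S ℝ) - Q) t s'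
        = (∑ s' ∈ J, if t = s' then (1:ℝ) else 0) - c t := by
      rw [← Finset.sum_sub_distrib]
      exact Finset.sum_congr rfl fun s' _ => by simp [Matrix.sub_apply, Matrix.one_apply]
    rw [this, Finset.sum_ite_eq J t (fun _ => (1:ℝ)), if_pos ht, hc1' t ht, sub_self]

lemma aux_qf {S : Type} [Fintype S] [DecidableEq S]
    (Q : Matrix S S ℝ) (m d x : S → ℝ)
    (hm : ∀ s, ∑ t, m t * Q t s = m s - d s)
    (G : Matrix S S ℝ)
    (hG : ∀ s t, G s t = m s * ((1:Matrix S S ℝ) - Q) s t + m t * ((1:Matrix S S ℝ) - Q) t s) :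
    x ⬝ᵥ G.mulVec x
      = (∑ s, ∑ t, m s * Q s t * (x s - x t)^2)
        + ∑ s, (m s * (1 - ∑ t, Q s t) * x s^2 + d s * x s^2) := by
  set A1 := ∑ s, m s * x s^2 with hA1
  set A2 := ∑ s, ∑ t, m s * Q s t * x s ^ 2 with hA2
  set A4 := ∑ s, ∑ t, m s * Q s t * (x s * x t) with hA4
  set A5 := ∑ s, d s * x s^2 with hA5
  have hB : ∑ s, ∑ t, m s * ((1:Matrix S S ℝ) - Q) s t * (x s * x t) = A1 - A4 := by
    rw [hA1, hA4, ← Finset.sum_sub_distrib]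
    refine Finset.sum_congr rfl fun s _ => ?_
    have e : ∀ t, m s * ((1:Matrix S S ℝ) - Q) s t * (x s * x t)
        = (if s = t then m s * (x s * x t) else 0) - m s * Q s t * (x s * x t) := by
      intro t
      rw [Matrix.sub_apply, Matrix.one_apply]
      by_cases h : s = t
      · rw [if_pos h, if_pos h]; ring
      · rw [if_neg h, if_neg h]; ring
    rw [Finset.sum_congr rfl fun t _ => e t, Finset.sum_sub_distrib,
      Finset.sum_ite_eq Finset.univ s (fun t => m s * (x s * x t)),
      if_pos (Finset.mem_univ s),
      show m s * (x s * x s) = m s * x s ^ 2 from by ring]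
  have hL : x ⬝ᵥ G.mulVec x = 2*A1 - 2*A4 := by
    have e1 : x ⬝ᵥ G.mulVec x = ∑ s, ∑ t, x s * (G s t * x t) := by
      simp only [dotProduct, Matrix.mulVec, Finset.mul_sum]
    have e2 : ∀ s t, x s * (G s t * x t)
        = m s * ((1:Matrix S S ℝ) - Q) s t * (x s * x t)
          + m t * ((1:Matrix S S ℝ) - Q) t s * (x t * x s) := by
      intro s t; rw [hG]; ring
    rw [e1, Finset.sum_congr rfl fun s _ => Finset.sum_congr rfl fun t _ => e2 s t]
    rw [Finset.sum_congr rfl fun s (_ : s ∈ Finset.univ) => Finset.sum_add_distrib,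
      Finset.sum_add_distrib]
    rw [Finset.sum_comm (f := fun s t => m t * ((1:Matrix S S ℝ) - Q) t s * (x t * x s))]
    rw [hB]
    ring
  have hC : ∑ s, ∑ t, m s * Q s t * x t^2 = A1 - A5 := by
    rw [Finset.sum_comm, hA1, hA5, ← Finset.sum_sub_distrib]
    refine Finset.sum_congr rfl fun t _ => ?_
    have e : ∑ s, m s * Q s t * x t ^ 2 = (∑ s, m s * Q s t) * x t^2 := by
      rw [Finset.sum_mul]
    rw [e, hm t]; ring
  have hT1 : ∑ s, ∑ t, m s * Q s t * (x s - x t)^2 = A2 + (A1 - A5) - 2*A4 := by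
    have e : ∀ s t, m s * Q s t * (x s - x t)^2
        = m s * Q s t * x s^2 + m s * Q s t * x t^2 - 2 * (m s * Q s t * (x s * x t)) := by
      intro s t; ring
    rw [Finset.sum_congr rfl fun s _ => Finset.sum_congr rfl fun t _ => e s t]
    have split : ∀ s : S, (∑ t, (m s * Q s t * x s^2 + m s * Q s t * x t^2
          - 2 * (m s * Q s t * (x s * x t))))
        = (∑ t, m s * Q s t * x s^2) + (∑ t, m s * Q s t * x t^2)
          - 2 * ∑ t, m s * Q s t * (x s * x t) := by
      intro s
      rw [Finset.sum_sub_distrib, Finset.sum_add_distrib, ← Finset.mul_sum]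
    rw [Finset.sum_congr rfl fun s _ => split s]
    rw [Finset.sum_sub_distrib, Finset.sum_add_distrib, ← Finset.mul_sum, hC,
      ← hA2, ← hA4]
  have hT2 : ∑ s, (m s * (1 - ∑ t, Q s t) * x s^2 + d s * x s^2) = A1 - A2 + A5 := by
    have e : ∀ s : S, m s * (1 - ∑ t, Q s t) * x s^2 + d s * x s^2
        = m s * x s^2 - (∑ t, m s * Q s t * x s^2) + d s * x s^2 := by
      intro s
      have e2 : ∑ t, m s * Q s t * x s ^ 2 = m s * x s ^ 2 * ∑ t, Q s t := by
        rw [Finset.mul_sum]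
        exact Finset.sum_congr rfl fun t _ => by ring
      rw [e2]; ring
    rw [Finset.sum_congr rfl fun s _ => e s, Finset.sum_add_distrib,
      Finset.sum_sub_distrib, ← hA1, ← hA2, ← hA5]
  rw [hL, hT1, hT2]
  ring

/-- If in addition `G` is irreducible (nonzero, and no nontrivial
partition `J, Jᶜ` of `S` has `G_{s s'} = 0` for all `s ∈ J`, `s' ∈ Jᶜ`), then
`M̄_ss > 0` for all `s`, and `G` is positive definite. -/
theorem stmt19 {S : Type} [Fintype S] [Nonempty S] [DecidableEq S]
    (Q : Matrix S S ℝ) (hQ0 : ∀ s s', 0 ≤ Q s s') (hQ1 : ∀ s, ∑ s', Q s s' ≤ 1)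
    (hinv : IsUnit (1 - Q))
    (d : S → ℝ) (hd : ∀ s, 0 ≤ d s)
    (hGne : Gmat Q d ≠ 0)
    (hirr : ∀ J : Set S, J.Nonempty → Jᶜ.Nonempty →
      ∃ s ∈ J, ∃ s' ∈ Jᶜ, Gmat Q d s s' ≠ 0) :
    (∀ s : S, 0 < MdiagSub Q d s) ∧
    (∀ x : S → ℝ, x ≠ 0 → 0 < x ⬝ᵥ (Gmat Q d).mulVec x) := by
  set m := MdiagSub Q d with hmdef
  have hm0 : ∀ s, 0 ≤ m s := aux_nonneg Q hQ0 hQ1 hinv d hd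
  have hmeq : ∀ s, ∑ t, m t * Q t s = m s - d s := aux_hm Q hinv d
  have hG : ∀ s t, Gmat Q d s t
      = m s * ((1:Matrix S S ℝ) - Q) s t + m t * ((1:Matrix S S ℝ) - Q) t s := by
    intro s t
    rw [Gmat, Matrix.add_apply, Matrix.transpose_apply, Matrix.diagonal_mul,
      Matrix.diagonal_mul]
  have hGoff : ∀ s t : S, s ≠ t → Gmat Q d s t = -(m s * Q s t) - m t * Q t s := by
    intro s t hst
    rw [hG s t, Matrix.sub_apply, Matrix.sub_apply, Matrix.one_apply, Matrix.one_apply,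
      if_neg hst, if_neg (Ne.symm hst)]
    ring
  -- Part 1 : positivity of m
  have hpos : ∀ s, 0 < m s := by
    by_contra hnp
    push_neg at hnp
    obtain ⟨s0, hs0⟩ := hnp
    have hs00 : m s0 = 0 := le_antisymm hs0 (hm0 s0)
    set Jset : Set S := {s | m s = 0} with hJset
    have hJne : Jset.Nonempty := ⟨s0, hs00⟩
    have hJcne : Jsetᶜ.Nonempty := by
      by_contra hempty
      rw [Set.not_nonempty_iff_eq_empty, Set.compl_empty_iff] at hempty
      have hmz : MdiagSub Q d = fun _ => 0 := by
        funext s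
        have : s ∈ Jset := hempty ▸ Set.mem_univ s
        exact this
      apply hGne
      rw [Gmat, hmz]
      have hdz : Matrix.diagonal (fun _ : S => (0:ℝ)) = 0 := Matrix.diagonal_zero
      rw [hdz]
      simp
    obtain ⟨s, hs, s', hs', hGss'⟩ := hirr Jset hJne hJcne
    have hms : m s = 0 := hs
    have hms' : m s' ≠ 0 := hs'
    have hss' : s ≠ s' := fun h => hms' (h ▸ hms)
    rw [hGoff s s' hss', hms, zero_mul, neg_zero, zero_sub, neg_ne_zero] at hGss'
    have hQs's : 0 < Q s' s := by
      rcases lt_or_eq_of_le (hQ0 s' s) with h | h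
      · exact h
      · exact absurd (by rw [← h, mul_zero]) hGss'
    have hms'pos : 0 < m s' := lt_of_le_of_ne (hm0 s') (Ne.symm hms')
    have hsum : m s' * Q s' s ≤ ∑ t, m t * Q t s :=
      Finset.single_le_sum (fun t _ => mul_nonneg (hm0 t) (hQ0 t s)) (Finset.mem_univ s')
    have := hmeq s
    have hds := hd s
    nlinarith
  refine ⟨hpos, ?_⟩
  -- Part 2 : positive definiteness
  intro x hx
  have hqf := aux_qf Q m d x hmeq (Gmat Q d) hG
  set T1 := ∑ s, ∑ t, m s * Q s t * (x s - x t)^2 with hT1def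
  set T2 := ∑ s : S, (m s * (1 - ∑ t, Q s t) * x s^2 + d s * x s^2) with hT2def
  have hT1nn : 0 ≤ T1 := Finset.sum_nonneg fun s _ => Finset.sum_nonneg fun t _ =>
    mul_nonneg (mul_nonneg (hm0 s) (hQ0 s t)) (sq_nonneg _)
  have hterm2 : ∀ s : S, 0 ≤ m s * (1 - ∑ t, Q s t) * x s^2 ∧ 0 ≤ d s * x s^2 := by
    intro s
    constructor
    · exact mul_nonneg (mul_nonneg (hm0 s) (by have := hQ1 s; linarith)) (sq_nonneg _)
    · exact mul_nonneg (hd s) (sq_nonneg _)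
  have hT2nn : 0 ≤ T2 := Finset.sum_nonneg fun s _ =>
    add_nonneg (hterm2 s).1 (hterm2 s).2
  by_contra hqle
  push_neg at hqle
  rw [hqf] at hqle
  have hT10 : T1 = 0 := le_antisymm (by linarith) hT1nn
  have hT20 : T2 = 0 := le_antisymm (by linarith) hT2nn
  -- extract pointwise conditions
  have hz1 : ∀ s t : S, m s * Q s t * (x s - x t)^2 = 0 := by
    intro s t
    have houter := (Finset.sum_eq_zero_iff_of_nonneg (fun s _ =>
      Finset.sum_nonneg fun t _ =>
        mul_nonneg (mul_nonneg (hm0 s) (hQ0 s t)) (sq_nonneg _))).mp hT10 s (Finset.mem_univ s)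
    exact (Finset.sum_eq_zero_iff_of_nonneg (fun t _ =>
      mul_nonneg (mul_nonneg (hm0 s) (hQ0 s t)) (sq_nonneg _))).mp houter t (Finset.mem_univ t)
  have hz2 : ∀ s : S, m s * (1 - ∑ t, Q s t) * x s^2 + d s * x s^2 = 0 := fun s =>
    (Finset.sum_eq_zero_iff_of_nonneg (fun s _ =>
      add_nonneg (hterm2 s).1 (hterm2 s).2)).mp hT20 s (Finset.mem_univ s)
  have hxx : ∀ s t : S, Q s t ≠ 0 → x s = x t := by
    intro s t hQ
    have h1 := hz1 s t
    have h2 : m s * Q s t ≠ 0 :=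
      mul_ne_zero (ne_of_gt (hpos s)) hQ
    have h3 : (x s - x t)^2 = 0 := by
      rcases mul_eq_zero.mp h1 with h | h
      · exact absurd h h2
      · exact h
    have := pow_eq_zero_iff (n := 2) (by norm_num) |>.mp h3
    linarith [sub_eq_zero.mp this]
  have hdx : ∀ s : S, x s ≠ 0 → d s = 0 := by
    intro s hxs
    have h2 := hz2 s
    have ha := (hterm2 s).1
    have hb := (hterm2 s).2
    have hds0 : d s * x s ^ 2 = 0 := by linarith
    rcases mul_eq_zero.mp hds0 with h | h
    · exact h
    · exact absurd (pow_eq_zero_iff (n := 2) (by norm_num) |>.mp h) hxs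
  -- case analysis on the support of x
  set Jset : Set S := {s | x s ≠ 0} with hJset
  have hJne : Jset.Nonempty := by
    obtain ⟨s, hs⟩ := Function.ne_iff.mp hx
    exact ⟨s, hs⟩
  by_cases hJc : Jsetᶜ.Nonempty
  · obtain ⟨s, hs, s', hs', hGss'⟩ := hirr Jset hJne hJc
    have hxs : x s ≠ 0 := hs
    have hxs' : x s' = 0 := not_not.mp hs'
    have hss' : s ≠ s' := fun h => hxs (h ▸ hxs')
    rw [hGoff s s' hss'] at hGss'
    have : Q s s' ≠ 0 ∨ Q s' s ≠ 0 := by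
      by_contra hboth
      push_neg at hboth
      rw [hboth.1, hboth.2] at hGss'
      simp at hGss'
    rcases this with h | h
    · exact hxs (by rw [hxx s s' h, hxs'])
    · exact hxs (by rw [← hxx s' s h, hxs'])
  · -- x never vanishes, so d = 0, so m = 0, contradiction with positivity
    rw [Set.not_nonempty_iff_eq_empty, Set.compl_empty_iff] at hJc
    have hxall : ∀ s, x s ≠ 0 := fun s => by
      have : s ∈ Jset := by rw [hJc]; trivial
      exact this
    have hd0 : d = 0 := funext fun s => hdx s (hxall s)
    have hmz : m = 0 := by
      rw [hmdef, MdiagSub, hd0, Matrix.zero_vecMul]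
    obtain ⟨s⟩ := ‹Nonempty S›
    have := hpos s
    rw [hmz] at this
    simp at this
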